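/- arXiv:2201.05708 — 9 statements merged into one kernel-verified Lean document; each statement's English description precedes it below -/
import Mathlib

section
/- Let k be a field, G a group, and H a normal subgroup of G. Let 0 → A → E →π→ k → 0 be a short exact sequence in Rep k G, where k carries the trivial G-action. Then the sequence splits after restriction to H (i.e. π admits an H-equivariant k-linear section) if and only if the extension originates from the H-trivial representations: there exist representations A′ and E′ of G on which every element of H acts as the identity, a short exact sequence 0 → A′ → E′ →π′→ k → 0 in Rep k G, and G-equivariant morphisms A′ → A and E′ → E such that the resulting diagram (with the identity map on k on the right) commutes. -/
/-!
An `H`-equivariant section of `π` is the same as an `H`-fixed vector `v` with `π v = 1`.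
Given one, the `H`-invariants `E^H` (a `G`-subrepresentation because `H` is normal) are
`H`-trivial and still surject onto `k`, so `0 → ker → E^H → k → 0` is an `H`-trivial extension
mapping to the given one. Conversely, the image in `E` of a preimage of `1` in an `H`-trivial `E'`
is such a vector.
-/

open CategoryTheory CategoryTheory.Limits

universe u

namespace Rep

lemma apply_eq_self_of_mono {k G : Type*} [Ring k] [Monoid G] {A B : Rep k G} (f : A ⟶ B) [Mono f]
    {g : G} (hg : ∀ y : B, B.ρ g y = y) (x : A) : A.ρ g x = x :=
  (mono_iff_injective f).1 ‹_› (by rw [hom_comm_apply, hg])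

lemma toInvariants_ρ_apply_of_mem {k G : Type*} [CommRing k] [Group G] (A : Rep k G)
    {H : Subgroup G} [H.Normal] {h : G} (hh : h ∈ H) (x : A.toInvariants H) :
    (A.toInvariants H).ρ h x = x :=
  Subtype.ext (x.2 ⟨h, hh⟩)

lemma exists_section_fixed_iff_exists_fixed_preimage_one {k G : Type*} [CommRing k] [Monoid G]
    {E : Rep k G} (π : E ⟶ trivial k G k) (S : Set G) :
    (∃ s : k →ₗ[k] E, (∀ x : k, π.hom (s x) = x) ∧ ∀ h ∈ S, ∀ x : k, E.ρ h (s x) = s x) ↔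
      ∃ v : E, π.hom v = 1 ∧ ∀ h ∈ S, E.ρ h v = v := by
  constructor
  · rintro ⟨s, hs, hS⟩
    exact ⟨s 1, hs 1, fun h hh => hS h hh 1⟩
  · rintro ⟨v, hv, hS⟩
    refine ⟨LinearMap.toSpanSingleton k E v, fun x => ?_, fun h hh x => ?_⟩
    · simp [hv]
    · simp [hS h hh]

end Rep

theorem splits_on_H_iff_originates_from_H_trivial
    {k G : Type u} [Field k] [Group G] (H : Subgroup G) [H.Normal]
    {A E : Rep k G} (ι : A ⟶ E) (π : E ⟶ Rep.trivial k G k)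
    (w : ι ≫ π = 0)
    (hse : (ShortComplex.mk ι π w).ShortExact) :
    (∃ s : k →ₗ[k] E, (∀ x : k, π.hom (s x) = x) ∧
        ∀ h ∈ H, ∀ x : k, E.ρ h (s x) = s x) ↔
      ∃ (A' E' : Rep k G) (ι' : A' ⟶ E') (π' : E' ⟶ Rep.trivial k G k)
        (w' : ι' ≫ π' = 0),
        (ShortComplex.mk ι' π' w').ShortExact ∧
        (∀ h ∈ H, ∀ x : A', A'.ρ h x = x) ∧
        (∀ h ∈ H, ∀ x : E', E'.ρ h x = x) ∧
        ∃ (f : A' ⟶ A) (g : E' ⟶ E), f ≫ ι = ι' ≫ g ∧ g ≫ π = π' := by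
  refine (Rep.exists_section_fixed_iff_exists_fixed_preimage_one π H).trans ⟨?_, ?_⟩
  · rintro ⟨v, hv, hvH⟩
    let g := Rep.subtype E _ (E.ρ.le_comap_invariants H)
    have : Epi (g ≫ π) := (Rep.epi_iff_surjective _).2 fun x =>
      ⟨x • ⟨v, fun h => hvH h h.2⟩, by simp [g, hv]⟩
    obtain ⟨f, hf⟩ := KernelFork.IsLimit.lift' hse.fIsKernel (kernel.ι (g ≫ π) ≫ g) (by simp)
    refine ⟨kernel (g ≫ π), E.toInvariants H, kernel.ι _, g ≫ π, kernel.condition _,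
      ⟨ShortComplex.kernelSequence_exact _⟩,
      fun h hh => Rep.apply_eq_self_of_mono (kernel.ι (g ≫ π)) (E.toInvariants_ρ_apply_of_mem hh),
      fun h hh => E.toInvariants_ρ_apply_of_mem hh, f, g, hf, rfl⟩
  · rintro ⟨A', E', ι', π', w', hse', -, hE', f, g, -, rfl⟩
    obtain ⟨v, hv⟩ := (Rep.epi_iff_surjective _).1 hse'.epi_g 1
    exact ⟨g.hom v, hv, fun h hh => by rw [← Rep.hom_comm_apply, hE' h hh]⟩
end

section
/- Let T be an abelian category and S a full subcategory of T closed under isomorphisms, subobjects, quotient objects (epimorphic images), and binary direct sums. Let 0 → A → E → X → 0 be a short exact sequence in T with A belonging to S. Then E belongs to S if and only if the extension originates from S, i.e. there exist a short exact sequence 0 → A′ → E′ → X → 0 in T with A′ and E′ belonging to S, and morphisms A′ → A and E′ → E, such that the diagram formed by the two short exact sequences, the maps A′ → A and E′ → E, and the identity on X, commutes. -/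
/-!
STATEMENT 2: Let `T` be an abelian category and `S` a full subcategory
(encoded as a predicate `P` on objects) closed under isomorphisms,
subobjects, quotient objects and binary direct sums. Given a short
exact sequence `0 → A → E → X → 0` with `A` in `S`, the object `E`
belongs to `S` if and only if the extension originates from `S`.
-/

open CategoryTheory CategoryTheory.Limits

universe v u

theorem mem_iff_originates_of_mem_left
    {T : Type u} [Category.{v} T] [Abelian T]
    (P : T → Prop)
    (hiso : ∀ {X Y : T}, (X ≅ Y) → P X → P Y)
    (hsub : ∀ {X Y : T} (f : X ⟶ Y), Mono f → P Y → P X)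
    (hquot : ∀ {X Y : T} (f : X ⟶ Y), Epi f → P X → P Y)
    (hsum : ∀ {X Y : T}, P X → P Y → P (X ⊞ Y))
    {A E X : T} (ι : A ⟶ E) (π : E ⟶ X) (w : ι ≫ π = 0)
    (hse : (ShortComplex.mk ι π w).ShortExact) (hA : P A) :
    P E ↔
      ∃ (A' E' : T) (ι' : A' ⟶ E') (π' : E' ⟶ X) (w' : ι' ≫ π' = 0),
        (ShortComplex.mk ι' π' w').ShortExact ∧ P A' ∧ P E' ∧
        ∃ (f : A' ⟶ A) (g : E' ⟶ E), f ≫ ι = ι' ≫ g ∧ g ≫ π = π' := by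
  constructor
  · intro hE
    exact ⟨A, E, ι, π, w, hse, hA, hE, 𝟙 A, 𝟙 E, by simp, by simp⟩
  · rintro ⟨A', E', ι', π', w', hse', hA', hE', f, g, hcomm, hπ⟩
    have hepi' : Epi π' := hse'.epi_g
    have h : A ⊞ E' ⟶ E := biprod.desc ι g
    have hepi : Epi (biprod.desc ι g) := by
      apply Preadditive.epi_of_cancel_zero
      intro Z t ht
      have h1 : ι ≫ t = 0 := by
        have := biprod.inl ≫= ht
        simpa using this
      have h2 : g ≫ t = 0 := by
        have := biprod.inr ≫= ht
        simpa using this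
      have hc := hse.gIsCokernel
      obtain ⟨u, hu⟩ := CokernelCofork.IsColimit.desc' hc t h1
      simp only [Cofork.π_ofπ] at hu
      have hu0 : u = 0 := by
        rw [← cancel_epi π']
        rw [← hπ]
        simp only [Category.assoc] at hu ⊢
        rw [hu, h2, comp_zero, comp_zero]
      rw [← hu, hu0, comp_zero]
    exact hquot (biprod.desc ι g) hepi (hsum hA hE')
end

section
/- Let T be an abelian category (with Ext groups), X an object of T, A an object of T, and A₁, A₂ two subobjects of A, with join A₁ ⊔ A₂ and meet A₁ ⊓ A₂ in the lattice of subobjects of A. Suppose that the pushforward map Ext¹(X, A₁ ⊔ A₂) → Ext¹(X, A) along the inclusion A₁ ⊔ A₂ → A is injective. If ℰ₁ ∈ Ext¹(X, A₁) and ℰ₂ ∈ Ext¹(X, A₂) have equal pushforwards in Ext¹(X, A) (along the inclusions A₁ → A and A₂ → A), then there exists a class ℰ ∈ Ext¹(X, A₁ ⊓ A₂) whose pushforward along the inclusion A₁ ⊓ A₂ → A₁ is ℰ₁ and whose pushforward along the inclusion A₁ ⊓ A₂ → A₂ is ℰ₂. -/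
/-!
STATEMENT 3: Let `T` be an abelian category, `X` an object, `A` an
object, and `A₁, A₂` subobjects of `A`. If the pushforward map
`Ext¹(X, A₁ ⊔ A₂) → Ext¹(X, A)` along the inclusion is injective, and
`ℰ₁ ∈ Ext¹(X, A₁)`, `ℰ₂ ∈ Ext¹(X, A₂)` have equal pushforwards in
`Ext¹(X, A)`, then there is a class `ℰ ∈ Ext¹(X, A₁ ⊓ A₂)` pushing
forward to `ℰ₁` and to `ℰ₂` along the respective inclusions.
-/

open CategoryTheory CategoryTheory.Abelian CategoryTheory.Limits

universe w v u

variable {T : Type u} [Category.{v} T] [Abelian T]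

namespace ExtInfAux

lemma mk₀_neg [HasExt.{w} T] {X Y : T} (f : X ⟶ Y) :
    Ext.mk₀ (-f) = -(Ext.mk₀ f) := by
  letI := HasDerivedCategory.standard T
  apply Ext.ext
  rw [Ext.neg_hom, Ext.mk₀_hom, Ext.mk₀_hom, Functor.map_neg]
  simp [ShiftedHom.mk₀]

variable {A : T} (A₁ A₂ : Subobject A)

/-- The middle-to-right map of the SES. -/
noncomputable def g : (A₁ ⊞ A₂ : T) ⟶ ((A₁ ⊔ A₂ : Subobject A) : T) :=
  biprod.desc (Subobject.ofLE A₁ (A₁ ⊔ A₂) le_sup_left)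
    (Subobject.ofLE A₂ (A₁ ⊔ A₂) le_sup_right)

/-- The left-to-middle map of the SES. -/
noncomputable def f : ((A₁ ⊓ A₂ : Subobject A) : T) ⟶ (A₁ ⊞ A₂ : T) :=
  biprod.lift (Subobject.ofLE (A₁ ⊓ A₂) A₁ inf_le_left)
    (-(Subobject.ofLE (A₁ ⊓ A₂) A₂ inf_le_right))

lemma fg : f A₁ A₂ ≫ g A₁ A₂ = 0 := by
  simp [f, g, Subobject.ofLE_comp_ofLE]

instance : Mono (f A₁ A₂) := by
  have : Mono (f A₁ A₂ ≫ biprod.fst) := by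
    simpa [f] using inferInstanceAs (Mono (Subobject.ofLE (A₁ ⊓ A₂) A₁ inf_le_left))
  exact mono_of_mono (f A₁ A₂) biprod.fst

instance : Epi (g A₁ A₂) := by
  apply Preadditive.epi_of_cancel_zero
  intro W d hd
  have h₁ : Subobject.ofLE A₁ (A₁ ⊔ A₂) le_sup_left ≫ d = 0 := by
    simpa [g] using biprod.inl ≫= hd
  have h₂ : Subobject.ofLE A₂ (A₁ ⊔ A₂) le_sup_right ≫ d = 0 := by
    simpa [g] using biprod.inr ≫= hd
  set K : Subobject A := Subobject.mk (kernel.ι d ≫ (A₁ ⊔ A₂).arrow) with hK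
  have hA₁ : A₁ ≤ K := by
    refine Subobject.le_mk_of_comm (kernel.lift d (Subobject.ofLE A₁ _ le_sup_left) h₁) ?_
    rw [kernel.lift_ι_assoc, Subobject.ofLE_arrow]
  have hA₂ : A₂ ≤ K := by
    refine Subobject.le_mk_of_comm (kernel.lift d (Subobject.ofLE A₂ _ le_sup_right) h₂) ?_
    rw [kernel.lift_ι_assoc, Subobject.ofLE_arrow]
  have hsup : A₁ ⊔ A₂ ≤ K := sup_le hA₁ hA₂
  have hcomm : Subobject.ofLE _ _ hsup ≫ (Subobject.underlyingIso _).hom ≫ kernel.ι d = 𝟙 _ := by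
    rw [← cancel_mono (A₁ ⊔ A₂).arrow, Category.assoc, Category.assoc, Category.id_comp]
    have := Subobject.underlyingIso_hom_comp_eq_mk (kernel.ι d ≫ (A₁ ⊔ A₂).arrow)
    calc Subobject.ofLE _ _ hsup ≫ (Subobject.underlyingIso _).hom ≫ kernel.ι d ≫ (A₁ ⊔ A₂).arrow
        = Subobject.ofLE _ _ hsup ≫ K.arrow := by rw [← this]
      _ = (A₁ ⊔ A₂).arrow := Subobject.ofLE_arrow _
  calc d = (Subobject.ofLE _ _ hsup ≫ (Subobject.underlyingIso _).hom ≫ kernel.ι d) ≫ d := by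
            rw [hcomm, Category.id_comp]
    _ = 0 := by simp

lemma g_eq : g A₁ A₂ = biprod.fst ≫ Subobject.ofLE A₁ (A₁ ⊔ A₂) le_sup_left
    + biprod.snd ≫ Subobject.ofLE A₂ (A₁ ⊔ A₂) le_sup_right := by
  apply biprod.hom_ext' <;> simp [g]

lemma harr {W : T} (k : W ⟶ (A₁ ⊞ A₂ : T)) (hk : k ≫ g A₁ A₂ = 0) :
    k ≫ biprod.fst ≫ A₁.arrow = -(k ≫ biprod.snd ≫ A₂.arrow) := by
  rw [g_eq] at hk
  have hk' : (k ≫ biprod.fst) ≫ Subobject.ofLE A₁ _ le_sup_left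
      = -((k ≫ biprod.snd) ≫ Subobject.ofLE A₂ _ le_sup_right) := by
    simp only [Preadditive.comp_add, ← Category.assoc] at hk
    linear_combination (norm := abel) hk
  have := hk' =≫ (A₁ ⊔ A₂).arrow
  simpa [Subobject.ofLE_arrow] using this

/-- the lift to the kernel -/
noncomputable def klift {W : T} (k : W ⟶ (A₁ ⊞ A₂ : T)) (hk : k ≫ g A₁ A₂ = 0) :
    W ⟶ ((A₁ ⊓ A₂ : Subobject A) : T) :=
  Subobject.factorThru _ (k ≫ biprod.fst ≫ A₁.arrow) (by
    rw [Subobject.inf_factors]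
    exact ⟨(Subobject.factors_iff _ _).mpr ⟨k ≫ biprod.fst, by simp⟩,
      (Subobject.factors_iff _ _).mpr ⟨-(k ≫ biprod.snd), by rw [harr A₁ A₂ k hk]; simp⟩⟩)

lemma klift_f {W : T} (k : W ⟶ (A₁ ⊞ A₂ : T)) (hk : k ≫ g A₁ A₂ = 0) :
    klift A₁ A₂ k hk ≫ f A₁ A₂ = k := by
  have harrow : klift A₁ A₂ k hk ≫ (A₁ ⊓ A₂).arrow = k ≫ biprod.fst ≫ A₁.arrow :=
    Subobject.factorThru_arrow _ _ _
  apply biprod.hom_ext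
  · rw [← cancel_mono A₁.arrow]
    have : Subobject.ofLE (A₁ ⊓ A₂) A₁ inf_le_left ≫ A₁.arrow = (A₁ ⊓ A₂).arrow :=
      Subobject.ofLE_arrow _
    simp only [f, Category.assoc, biprod.lift_fst, this, harrow]
  · rw [← cancel_mono A₂.arrow]
    have : Subobject.ofLE (A₁ ⊓ A₂) A₂ inf_le_right ≫ A₂.arrow = (A₁ ⊓ A₂).arrow :=
      Subobject.ofLE_arrow _
    simp only [f, Category.assoc, biprod.lift_snd, Preadditive.neg_comp,
      Preadditive.comp_neg, this, harrow]
    rw [harr A₁ A₂ k hk, neg_neg]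

/-- `f` is a kernel of `g`. -/
noncomputable def isKernel : IsLimit (KernelFork.ofι (f A₁ A₂) (fg A₁ A₂)) :=
  KernelFork.IsLimit.ofι _ _
    (fun {W} k hk => klift A₁ A₂ k hk)
    (fun {W} k hk => klift_f A₁ A₂ k hk)
    (fun {W} k hk m hm => by
      rw [← cancel_mono (f A₁ A₂), hm, klift_f A₁ A₂ k hk])



/-- The short complex `A₁ ⊓ A₂ → A₁ ⊞ A₂ → A₁ ⊔ A₂`. -/
noncomputable def S : ShortComplex T := ShortComplex.mk (f A₁ A₂) (g A₁ A₂) (fg A₁ A₂)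

lemma shortExact : (S A₁ A₂).ShortExact where
  exact := (S A₁ A₂).exact_of_f_is_kernel (isKernel A₁ A₂)
  mono_f := inferInstanceAs (Mono (f A₁ A₂))
  epi_g := inferInstanceAs (Epi (g A₁ A₂))

end ExtInfAux

theorem exists_ext_of_inf_of_pushforwards_eq'
    {T : Type u} [Category.{v} T] [Abelian T] [HasExt.{w} T]
    (X : T) {A : T} (A₁ A₂ : Subobject A)
    (hinj : Function.Injective
      (fun e : Ext X ((A₁ ⊔ A₂ : Subobject A) : T) 1 =>
        e.comp (Ext.mk₀ (A₁ ⊔ A₂).arrow) (add_zero 1)))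
    (e₁ : Ext X ((A₁ : T)) 1) (e₂ : Ext X ((A₂ : T)) 1)
    (h : e₁.comp (Ext.mk₀ A₁.arrow) (add_zero 1) =
         e₂.comp (Ext.mk₀ A₂.arrow) (add_zero 1)) :
    ∃ e : Ext X ((A₁ ⊓ A₂ : Subobject A) : T) 1,
      e.comp (Ext.mk₀ (Subobject.ofLE (A₁ ⊓ A₂) A₁ inf_le_left)) (add_zero 1) = e₁ ∧
      e.comp (Ext.mk₀ (Subobject.ofLE (A₁ ⊓ A₂) A₂ inf_le_right)) (add_zero 1) = e₂ := by
  set z : Ext X (A₁ ⊞ A₂ : T) 1 :=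
    e₁.comp (Ext.mk₀ biprod.inl) (add_zero 1) - e₂.comp (Ext.mk₀ biprod.inr) (add_zero 1)
    with hzdef
  have hcompz : ∀ (Y : T) (u : (A₁ ⊞ A₂ : T) ⟶ Y),
      z.comp (Ext.mk₀ u) (add_zero 1) =
        e₁.comp (Ext.mk₀ (biprod.inl ≫ u)) (add_zero 1)
        - e₂.comp (Ext.mk₀ (biprod.inr ≫ u)) (add_zero 1) := by
    intro Y u
    rw [hzdef, sub_eq_add_neg, Ext.add_comp, Ext.neg_comp,
      Ext.comp_assoc_of_third_deg_zero, Ext.comp_assoc_of_third_deg_zero,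
      Ext.mk₀_comp_mk₀, Ext.mk₀_comp_mk₀, sub_eq_add_neg]
  have hz : z.comp (Ext.mk₀ (ExtInfAux.g A₁ A₂)) (add_zero 1) = 0 := by
    apply hinj
    show (z.comp (Ext.mk₀ (ExtInfAux.g A₁ A₂)) (add_zero 1)).comp
        (Ext.mk₀ (A₁ ⊔ A₂).arrow) (add_zero 1) = _
    rw [Ext.comp_assoc_of_third_deg_zero, Ext.mk₀_comp_mk₀, hcompz]
    have h1 : biprod.inl ≫ ExtInfAux.g A₁ A₂ ≫ (A₁ ⊔ A₂).arrow = A₁.arrow := by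
      simp [ExtInfAux.g, Subobject.ofLE_arrow]
    have h2 : biprod.inr ≫ ExtInfAux.g A₁ A₂ ≫ (A₁ ⊔ A₂).arrow = A₂.arrow := by
      simp [ExtInfAux.g, Subobject.ofLE_arrow]
    rw [h1, h2, h, sub_self]
    exact (Ext.zero_comp X 1 (Ext.mk₀ (A₁ ⊔ A₂).arrow) 1 (add_zero 1)).symm
  obtain ⟨e, he⟩ : ∃ e : Ext X ((A₁ ⊓ A₂ : Subobject A) : T) 1,
      e.comp (Ext.mk₀ (ExtInfAux.f A₁ A₂)) (add_zero 1) = z :=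
    Ext.covariant_sequence_exact₂ X (ExtInfAux.shortExact A₁ A₂) z hz
  replace he : e.comp (Ext.mk₀ (ExtInfAux.f A₁ A₂)) (add_zero 1) = z := he
  have hef : ∀ (Y : T) (u : (A₁ ⊞ A₂ : T) ⟶ Y),
      e.comp (Ext.mk₀ (ExtInfAux.f A₁ A₂ ≫ u)) (add_zero 1) =
        z.comp (Ext.mk₀ u) (add_zero 1) := by
    intro Y u
    rw [← Ext.mk₀_comp_mk₀, ← Ext.comp_assoc_of_third_deg_zero, he]
  refine ⟨e, ?_, ?_⟩
  · have h1 : ExtInfAux.f A₁ A₂ ≫ biprod.fst = Subobject.ofLE (A₁ ⊓ A₂) A₁ inf_le_left := by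
      simp [ExtInfAux.f]
    rw [← h1, hef, hcompz]
    simp [Ext.mk₀_zero, Ext.comp_zero]
  · have h2 : ExtInfAux.f A₁ A₂ ≫ biprod.snd
        = -(Subobject.ofLE (A₁ ⊓ A₂) A₂ inf_le_right) := by
      simp [ExtInfAux.f]
    have := hef _ biprod.snd
    rw [h2, ExtInfAux.mk₀_neg, Ext.comp_neg, hcompz] at this
    rw [← neg_eq_iff_eq_neg.mpr this.symm]
    simp [Ext.mk₀_zero, Ext.zero_comp]


theorem exists_ext_of_inf_of_pushforwards_eq
    {T : Type u} [Category.{v} T] [Abelian T] [HasExt.{w} T]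
    (X : T) {A : T} (A₁ A₂ : Subobject A)
    (hinj : Function.Injective
      (fun e : Ext X ((A₁ ⊔ A₂ : Subobject A) : T) 1 =>
        e.comp (Ext.mk₀ (A₁ ⊔ A₂).arrow) (add_zero 1)))
    (e₁ : Ext X ((A₁ : T)) 1) (e₂ : Ext X ((A₂ : T)) 1)
    (h : e₁.comp (Ext.mk₀ A₁.arrow) (add_zero 1) =
         e₂.comp (Ext.mk₀ A₂.arrow) (add_zero 1)) :
    ∃ e : Ext X ((A₁ ⊓ A₂ : Subobject A) : T) 1,
      e.comp (Ext.mk₀ (Subobject.ofLE (A₁ ⊓ A₂) A₁ inf_le_left)) (add_zero 1) = e₁ ∧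
      e.comp (Ext.mk₀ (Subobject.ofLE (A₁ ⊓ A₂) A₂ inf_le_right)) (add_zero 1) = e₂ :=
  exists_ext_of_inf_of_pushforwards_eq' X A₁ A₂ hinj e₁ e₂ h
end

section
/- Let T be an abelian category, and let ℒ : 0 → B →ι_L→ L →π_L→ A → 0 and 𝒩 : 0 → A →ι_N→ N →π_N→ C → 0 be short exact sequences in T. Suppose Ext¹(C, B) = 0 (the group Ext¹(C, B) is trivial). If M and M′ are both objects attached to the pair (ℒ, 𝒩), then M and M′ are isomorphic. -/
/-!
STATEMENT 7: (Grothendieck, SGA 7, Lemma 9.3.8(b).) Given short exact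
sequences `ℒ : 0 → B → L → A → 0` and `𝒩 : 0 → A → N → C → 0` in an
abelian category `T` with `Ext¹(C, B) = 0`, any two objects attached
to the pair `(ℒ, 𝒩)` are isomorphic.
-/

open CategoryTheory CategoryTheory.Abelian

universe w v u

variable {T : Type u} [Category.{v} T] [Abelian T]

/-- `M` is attached to the pair of extensions `(ℒ, 𝒩)` given by
`ιL, πL, ιN, πN` (an *extension panachée*). -/
def IsAttached {B L A N C : T}
    (ιL : B ⟶ L) (πL : L ⟶ A) (ιN : A ⟶ N) (πN : N ⟶ C) (M : T) : Prop :=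
  ∃ (α : L ⟶ M) (p : M ⟶ N) (w₁ : (ιL ≫ α) ≫ p = 0) (w₂ : α ≫ p ≫ πN = 0),
    (ShortComplex.mk (ιL ≫ α) p w₁).ShortExact ∧
    (ShortComplex.mk α (p ≫ πN) w₂).ShortExact ∧
    α ≫ p = πL ≫ ιN

section Aux

universe w'

variable [HasExt.{w} T] [HasDerivedCategory.{w'} T]

/-- The homology functor applied to the single functor is the identity. -/
noncomputable def auxSingleHomologyIso :
    DerivedCategory.singleFunctor T 0 ⋙ DerivedCategory.homologyFunctor T 0 ≅ 𝟭 T :=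
  Functor.isoWhiskerRight ((SingleFunctors.evaluation _ _ 0).mapIso
      (DerivedCategory.singleFunctorsPostcompQIso T)) (DerivedCategory.homologyFunctor T 0) ≪≫
    Functor.associator _ _ _ ≪≫
    Functor.isoWhiskerLeft (CochainComplex.singleFunctor T 0)
      (DerivedCategory.homologyFunctorFactors T 0) ≪≫
    HomologicalComplex.homologyFunctorSingleIso T (ComplexShape.up ℤ) 0

/-- The morphism attached to an element of `Ext X Y 0`. -/
noncomputable def extToHom {X Y : T} (α : Ext X Y 0) : X ⟶ Y :=
  (auxSingleHomologyIso (T := T)).inv.app X ≫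
    (DerivedCategory.homologyFunctor T 0).map
      ((ShiftedHom.homEquiv ((0 : ℕ) : ℤ) (by simp)).symm α.hom) ≫
    (auxSingleHomologyIso (T := T)).hom.app Y

lemma extToHom_mk₀ {X Y : T} (f : X ⟶ Y) : extToHom (Ext.mk₀ f) = f := by
  dsimp only [extToHom]
  rw [Ext.mk₀_hom]
  erw [Equiv.symm_apply_apply]
  exact NatIso.naturality_1 (auxSingleHomologyIso (T := T)) f

lemma extToHom_comp {X Y Z : T} (α : Ext X Y 0) (β : Ext Y Z 0) :
    extToHom (α.comp β (zero_add 0)) = extToHom α ≫ extToHom β := by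
  obtain ⟨a, ha⟩ := (ShiftedHom.homEquiv ((0 : ℕ) : ℤ)
    (by simp : ((0 : ℕ) : ℤ) = 0)).surjective α.hom
  obtain ⟨b, hb⟩ := (ShiftedHom.homEquiv ((0 : ℕ) : ℤ)
    (by simp : ((0 : ℕ) : ℤ) = 0)).surjective β.hom
  dsimp only [extToHom]
  rw [Ext.comp_hom, ← ha, ← hb]
  erw [Equiv.symm_apply_apply, Equiv.symm_apply_apply]
  rw [ShiftedHom.homEquiv_apply, ShiftedHom.homEquiv_apply,
    ShiftedHom.mk₀_comp_mk₀ a b _ (by simp) (by simp)]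
  erw [Equiv.symm_apply_apply]
  simp

end Aux

theorem attached_unique_of_ext_eq_zero
    [HasExt.{w} T] {B L A N C : T}
    (ιL : B ⟶ L) (πL : L ⟶ A) (wL : ιL ≫ πL = 0)
    (hL : (ShortComplex.mk ιL πL wL).ShortExact)
    (ιN : A ⟶ N) (πN : N ⟶ C) (wN : ιN ≫ πN = 0)
    (hN : (ShortComplex.mk ιN πN wN).ShortExact)
    (hext : ∀ e : Ext C B 1, e = 0)
    {M M' : T}
    (hM : IsAttached ιL πL ιN πN M) (hM' : IsAttached ιL πL ιN πN M') :
    Nonempty (M ≅ M') := by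
  letI : HasDerivedCategory.{max u v} T := HasDerivedCategory.standard T
  obtain ⟨α, p, w₁, w₂, h₁, h₂, hc⟩ := hM
  obtain ⟨α', p', w₁', w₂', h₁', h₂', hc'⟩ := hM'
  -- Step 1 : the obstruction class for extending `α' : L ⟶ M'` to `M` vanishes
  have key : h₂.extClass.comp (Ext.mk₀ α') (add_zero 1) = 0 := by
    have hcomp : (h₂.extClass.comp (Ext.mk₀ α') (add_zero 1)).comp (Ext.mk₀ p')
        (add_zero 1) = 0 := by
      rw [Ext.comp_assoc_of_second_deg_zero, Ext.mk₀_comp_mk₀, hc', ← hc,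
        ← Ext.mk₀_comp_mk₀]
      exact h₂.extClass_comp_assoc (γ := Ext.mk₀ p)
    obtain ⟨y, hy⟩ := Ext.covariant_sequence_exact₂ C h₁' _ hcomp
    rw [← hy, hext y, Ext.zero_comp]
  -- Step 2 : get `φ : M ⟶ M'` with `α ≫ φ = α'`
  obtain ⟨Φ, hΦ⟩ := Ext.contravariant_sequence_exact₁ h₂ M' (Ext.mk₀ α') rfl key
  set φ : M ⟶ M' := extToHom Φ with hφdef
  have hαφ : α ≫ φ = α' := by
    have := congrArg extToHom hΦ
    rwa [extToHom_comp, extToHom_mk₀, extToHom_mk₀] at this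
  -- Step 3 : `φ ≫ p' - p` kills `L`, so it factors as `(p ≫ πN) ≫ v`
  have hv0 : α ≫ (φ ≫ p' - p) = 0 := by
    rw [Preadditive.comp_sub, ← Category.assoc, hαφ, hc', hc, sub_self]
  obtain ⟨v, hv⟩ := Limits.CokernelCofork.IsColimit.desc' h₂.gIsCokernel (φ ≫ p' - p) hv0
  -- Step 4 : lift `v : C ⟶ N` along `p' : M' ⟶ N` (obstruction lies in `Ext C B 1 = 0`)
  obtain ⟨W, hW⟩ := Ext.covariant_sequence_exact₃ C h₁' (Ext.mk₀ v) rfl (hext _)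
  set w : C ⟶ M' := extToHom W with hwdef
  have hw : w ≫ p' = v := by
    have := congrArg extToHom hW
    rw [extToHom_comp, extToHom_mk₀, extToHom_mk₀] at this
    exact this
  -- Step 5 : the corrected morphism
  set φ' : M ⟶ M' := φ - (p ≫ πN) ≫ w with hφ'def
  have hαφ' : α ≫ φ' = α' := by
    rw [hφ'def, Preadditive.comp_sub, ← Category.assoc, w₂, Limits.zero_comp, sub_zero, hαφ]
  have hφ'p : φ' ≫ p' = p := by
    have hπv : (p ≫ πN) ≫ v = φ ≫ p' - p := hv
    rw [hφ'def, Preadditive.sub_comp, Category.assoc, hw, hπv]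
    abel
  -- Step 6 : `φ'` is an isomorphism by the five lemma
  let ψ : ShortComplex.mk (ιL ≫ α) p w₁ ⟶ ShortComplex.mk (ιL ≫ α') p' w₁' :=
    { τ₁ := 𝟙 B
      τ₂ := φ'
      τ₃ := 𝟙 N
      comm₁₂ := by rw [Category.id_comp, Category.assoc, hαφ']
      comm₂₃ := by rw [Category.comp_id, hφ'p] }
  have : IsIso ψ.τ₂ := ShortComplex.isIso₂_of_shortExact_of_isIso₁₃' ψ h₁ h₁'
    (by dsimp only [ψ]; infer_instance) (by dsimp only [ψ]; infer_instance)
  have hiso : IsIso φ' := this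
  exact ⟨asIso φ'⟩
end

section
/- Let T be an abelian category, and let ℒ : 0 → B →ι_L→ L →π_L→ A → 0 and 𝒩 : 0 → A →ι_N→ N →π_N→ C → 0 be short exact sequences in T. Let f_B, f_A, f_C be automorphisms of B, A, C respectively, and consider the twisted sequences ℒ′ : 0 → B →(ι_L∘f_B)→ L →(f_A⁻¹∘π_L)→ A → 0 and 𝒩′ : 0 → A →(ι_N∘f_A)→ N →(f_C∘π_N)→ C → 0 (which are again short exact). If an object M is attached to the pair (ℒ, 𝒩), then M is also attached to the pair (ℒ′, 𝒩′). -/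
/-!
STATEMENT 8: Given short exact sequences `ℒ : 0 → B →ιL→ L →πL→ A → 0`
and `𝒩 : 0 → A →ιN→ N →πN→ C → 0` in an abelian category `T`, and
automorphisms `f_B`, `f_A`, `f_C` of `B`, `A`, `C`, consider the
twisted sequences `ℒ′ : 0 → B →(ιL∘f_B)→ L →(f_A⁻¹∘πL)→ A → 0` and
`𝒩′ : 0 → A →(ιN∘f_A)→ N →(f_C∘πN)→ C → 0`. If an object `M` is
attached to `(ℒ, 𝒩)`, then `M` is also attached to `(ℒ′, 𝒩′)`.
-/

open CategoryTheory

universe v u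

variable {T : Type u} [Category.{v} T] [Abelian T]

theorem isAttached_twist
    {B L A N C : T}
    (ιL : B ⟶ L) (πL : L ⟶ A) (wL : ιL ≫ πL = 0)
    (hL : (ShortComplex.mk ιL πL wL).ShortExact)
    (ιN : A ⟶ N) (πN : N ⟶ C) (wN : ιN ≫ πN = 0)
    (hN : (ShortComplex.mk ιN πN wN).ShortExact)
    (fB : B ≅ B) (fA : A ≅ A) (fC : C ≅ C)
    {M : T} (hM : IsAttached ιL πL ιN πN M) :
    IsAttached (fB.hom ≫ ιL) (πL ≫ fA.inv) (fA.hom ≫ ιN) (πN ≫ fC.hom) M := by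
  obtain ⟨α, p, w₁, w₂, h₁, h₂, hcomp⟩ := hM
  have wA : ((fB.hom ≫ ιL) ≫ α) ≫ p = 0 := by
    have hz : ιL ≫ α ≫ p = 0 := by simpa using w₁
    simp [hz]
  have wC : α ≫ (p ≫ πN ≫ fC.hom) = 0 := by
    have hz : (α ≫ p ≫ πN) ≫ fC.hom = 0 := by rw [w₂, Limits.zero_comp]
    simpa using hz
  have e₁ : ShortComplex.mk (ιL ≫ α) p w₁ ≅ ShortComplex.mk ((fB.hom ≫ ιL) ≫ α) p wA :=
    ShortComplex.isoMk fB.symm (Iso.refl _) (Iso.refl _) (by simp) (by simp)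
  have e₂ : ShortComplex.mk α (p ≫ πN) w₂ ≅ ShortComplex.mk α (p ≫ πN ≫ fC.hom) wC :=
    ShortComplex.isoMk (Iso.refl _) (Iso.refl _) fC (by simp) (by simp)
  exact ⟨α, p, wA, wC, ShortComplex.shortExact_of_iso e₁ h₁,
    ShortComplex.shortExact_of_iso e₂ h₂, by rw [hcomp]; simp⟩
end

section
/- Let T be an abelian category with objects B, A, C, and suppose given exact functors Wb, Wa : T → T (each preserving short exact sequences) together with natural transformations εb : Wb ⟹ Id_T and εa : Wa ⟹ Id_T all of whose components are monomorphisms, such that: the components of εb and εa at B are isomorphisms, the component of εa at A is an isomorphism, Wb(A) ≅ 0, Wb(C) ≅ 0, and Wa(C) ≅ 0. Let ℒ : 0 → B →ι_L→ L →π_L→ A → 0 and 𝒩 : 0 → A →ι_N→ N →π_N→ C → 0, and ℒ′ : 0 → B →ι_{L′}→ L′ →π_{L′}→ A → 0 and 𝒩′ : 0 → A →ι_{N′}→ N′ →π_{N′}→ C → 0, be short exact sequences. If a single object M is attached both to the pair (ℒ, 𝒩) and to the pair (ℒ′, 𝒩′), then the two pairs are equivalent: there exist automorphisms f_B, f_A,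 f_C of B, A, C and isomorphisms φ : L′ → L and ψ : N′ → N such that φ∘ι_{L′} = ι_L∘f_B, π_L∘φ = f_A∘π_{L′}, ψ∘ι_{N′} = ι_N∘f_A, and π_N∘ψ = f_C∘π_{N′}. -/
/-!
STATEMENT 9: (Lemma 6.5(b) of the paper.) Let `T` be an abelian
category with objects `B`, `A`, `C`, and let `Wb`, `Wa : T ⥤ T` be
exact functors together with natural transformations `εb : Wb ⟶ 𝟭 T`
and `εa : Wa ⟶ 𝟭 T` all of whose components are monomorphisms, such
that: the components of `εb`, `εa` at `B` are isomorphisms, the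
component of `εa` at `A` is an isomorphism, and `Wb(A)`, `Wb(C)`,
`Wa(C)` are zero. If a single object `M` is attached both to the pair
`(ℒ, 𝒩)` and to the pair `(ℒ′, 𝒩′)` of short exact sequences, then the
two pairs are equivalent (they differ by a twist by automorphisms of
`B`, `A`, `C`).
-/

open CategoryTheory CategoryTheory.Limits

universe v u

variable {T : Type u} [Category.{v} T] [Abelian T]

theorem pairs_equivalent_of_common_attached_object
    (Wb Wa : T ⥤ T)
    [PreservesFiniteLimits Wb] [PreservesFiniteColimits Wb]
    [PreservesFiniteLimits Wa] [PreservesFiniteColimits Wa]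
    (εb : Wb ⟶ 𝟭 T) (εa : Wa ⟶ 𝟭 T)
    (hεb : ∀ X : T, Mono (εb.app X)) (hεa : ∀ X : T, Mono (εa.app X))
    {B A C : T}
    (hBb : IsIso (εb.app B)) (hBa : IsIso (εa.app B)) (hAa : IsIso (εa.app A))
    (hAb : IsZero (Wb.obj A)) (hCb : IsZero (Wb.obj C)) (hCa : IsZero (Wa.obj C))
    {L N L' N' : T}
    (ιL : B ⟶ L) (πL : L ⟶ A) (wL : ιL ≫ πL = 0)
    (hL : (ShortComplex.mk ιL πL wL).ShortExact)
    (ιN : A ⟶ N) (πN : N ⟶ C) (wN : ιN ≫ πN = 0)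
    (hN : (ShortComplex.mk ιN πN wN).ShortExact)
    (ιL' : B ⟶ L') (πL' : L' ⟶ A) (wL' : ιL' ≫ πL' = 0)
    (hL' : (ShortComplex.mk ιL' πL' wL').ShortExact)
    (ιN' : A ⟶ N') (πN' : N' ⟶ C) (wN' : ιN' ≫ πN' = 0)
    (hN' : (ShortComplex.mk ιN' πN' wN').ShortExact)
    {M : T}
    (hM : IsAttached ιL πL ιN πN M) (hM' : IsAttached ιL' πL' ιN' πN' M) :
    ∃ (fB : B ≅ B) (fA : A ≅ A) (fC : C ≅ C) (φ : L' ≅ L) (ψ : N' ≅ N),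
      ιL' ≫ φ.hom = fB.hom ≫ ιL ∧
      φ.hom ≫ πL = πL' ≫ fA.hom ∧
      ιN' ≫ ψ.hom = fA.hom ≫ ιN ∧
      ψ.hom ≫ πN = πN' ≫ fC.hom := by
  obtain ⟨α, p, w₁, w₂, hS1, hS2, hcomp⟩ := hM
  obtain ⟨α', p', w₁', w₂', hS1', hS2', hcomp'⟩ := hM'
  haveI := hS2.mono_f
  haveI := hS2'.mono_f
  haveI := hL.epi_g
  haveI := hL'.epi_g
  haveI := hN.epi_g
  haveI := hN'.epi_g
  haveI := hS1.epi_g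
  haveI := hS1'.epi_g
  -- `εa.app L` and `εa.app L'` are isomorphisms (five lemma).
  have hεaL : IsIso (εa.app L) := by
    refine ShortComplex.isIso₂_of_shortExact_of_isIso₁₃'
      (S₁ := (ShortComplex.mk ιL πL wL).map Wa) (S₂ := ShortComplex.mk ιL πL wL)
      { τ₁ := εa.app B, τ₂ := εa.app L, τ₃ := εa.app A,
        comm₁₂ := by exact (εa.naturality ιL).symm,
        comm₂₃ := by exact (εa.naturality πL).symm }
      (hL.map_of_exact Wa) hL hBa hAa
  have hεaL' : IsIso (εa.app L') := by
    refine ShortComplex.isIso₂_of_shortExact_of_isIso₁₃'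
      (S₁ := (ShortComplex.mk ιL' πL' wL').map Wa) (S₂ := ShortComplex.mk ιL' πL' wL')
      { τ₁ := εa.app B, τ₂ := εa.app L', τ₃ := εa.app A,
        comm₁₂ := by exact (εa.naturality ιL').symm,
        comm₂₃ := by exact (εa.naturality πL').symm }
      (hL'.map_of_exact Wa) hL' hBa hAa
  -- `Wa.map α` and `Wa.map α'` are isomorphisms since `Wa C = 0`.
  have hWaα : IsIso (Wa.map α) := ((hS2.map_of_exact Wa).isIso_f_iff).2 hCa
  have hWaα' : IsIso (Wa.map α') := ((hS2'.map_of_exact Wa).isIso_f_iff).2 hCa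
  set uL : L ⟶ Wa.obj M := inv (εa.app L) ≫ Wa.map α with huL
  set uL' : L' ⟶ Wa.obj M := inv (εa.app L') ≫ Wa.map α' with huL'
  haveI : IsIso uL := by rw [huL]; infer_instance
  haveI : IsIso uL' := by rw [huL']; infer_instance
  have hαu : uL ≫ εa.app M = α := by
    rw [huL, Category.assoc, εa.naturality α, IsIso.inv_hom_id_assoc]; rfl
  have hαu' : uL' ≫ εa.app M = α' := by
    rw [huL', Category.assoc, εa.naturality α', IsIso.inv_hom_id_assoc]; rfl
  set φ : L' ≅ L := asIso uL' ≪≫ (asIso uL).symm with hφ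
  have hφα : φ.hom ≫ α = α' := by
    rw [hφ, ← hαu, ← hαu']
    simp
  -- `Wb N = 0`
  have hWbπN : IsIso (Wb.map ιN) := ((hN.map_of_exact Wb).isIso_f_iff).2 hCb
  have hNb : IsZero (Wb.obj N) := by
    have : IsIso (Wb.map πN) := ((hN.map_of_exact Wb).isIso_g_iff).2 hAb
    exact hCb.of_iso (asIso (Wb.map πN))
  -- `Wb.map (ιL ≫ α)` and `Wb.map (ιL' ≫ α')` are isomorphisms.
  have hWbβ : IsIso (Wb.map (ιL ≫ α)) := ((hS1.map_of_exact Wb).isIso_f_iff).2 hNb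
  have hNb' : IsZero (Wb.obj N') := by
    have : IsIso (Wb.map πN') := ((hN'.map_of_exact Wb).isIso_g_iff).2 hAb
    exact hCb.of_iso (asIso (Wb.map πN'))
  have hWbβ' : IsIso (Wb.map (ιL' ≫ α')) := ((hS1'.map_of_exact Wb).isIso_f_iff).2 hNb'
  set uB : B ⟶ Wb.obj M := inv (εb.app B) ≫ Wb.map (ιL ≫ α) with huB
  set uB' : B ⟶ Wb.obj M := inv (εb.app B) ≫ Wb.map (ιL' ≫ α') with huB'
  haveI : IsIso uB := by rw [huB]; infer_instance
  haveI : IsIso uB' := by rw [huB']; infer_instance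
  have hβu : uB ≫ εb.app M = ιL ≫ α := by
    rw [huB, Category.assoc, εb.naturality (ιL ≫ α), IsIso.inv_hom_id_assoc]; rfl
  have hβu' : uB' ≫ εb.app M = ιL' ≫ α' := by
    rw [huB', Category.assoc, εb.naturality (ιL' ≫ α'), IsIso.inv_hom_id_assoc]; rfl
  set fB : B ≅ B := asIso uB' ≪≫ (asIso uB).symm with hfB
  have hfBβ : fB.hom ≫ ιL ≫ α = ιL' ≫ α' := by
    rw [hfB, ← hβu, ← hβu']
    simp
  have hφιL : ιL' ≫ φ.hom = fB.hom ≫ ιL := by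
    rw [← cancel_mono α]
    simp only [Category.assoc]
    rw [hφα, hfBβ]
  have hfBβ' : ιL ≫ α = fB.inv ≫ ιL' ≫ α' := by
    rw [← hfBβ, Iso.inv_hom_id_assoc]
  have hφιL' : ιL ≫ φ.inv = fB.inv ≫ ιL' := by
    rw [← cancel_mono φ.hom, Category.assoc, Category.assoc, Iso.inv_hom_id,
      Category.comp_id, hφιL, Iso.inv_hom_id_assoc]
  -- construction of `fA`
  set fAh : A ⟶ A := hL'.exact.desc (φ.hom ≫ πL)
    (by rw [reassoc_of% hφιL]; simp [wL]) with hfAh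
  have hπfA : πL' ≫ fAh = φ.hom ≫ πL := hL'.exact.g_desc _ _
  set fAh' : A ⟶ A := hL.exact.desc (φ.inv ≫ πL')
    (by rw [reassoc_of% hφιL']; simp [wL']) with hfAh'
  have hπfA' : πL ≫ fAh' = φ.inv ≫ πL' := hL.exact.g_desc _ _
  have hfA1 : fAh ≫ fAh' = 𝟙 A := by
    rw [← cancel_epi πL', reassoc_of% hπfA, hπfA', Iso.hom_inv_id_assoc, Category.comp_id]
  have hfA2 : fAh' ≫ fAh = 𝟙 A := by
    rw [← cancel_epi πL, reassoc_of% hπfA', hπfA, Iso.inv_hom_id_assoc, Category.comp_id]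
  set fA : A ≅ A := ⟨fAh, fAh', hfA1, hfA2⟩ with hfA
  -- construction of `ψ`
  have hw₁ : ιL ≫ α ≫ p = 0 := by simpa using w₁
  have hw₁' : ιL' ≫ α' ≫ p' = 0 := by simpa using w₁'
  set ψh : N' ⟶ N := hS1'.exact.desc p
    (by show (ιL' ≫ α') ≫ p = 0; rw [← hfBβ]; simp only [Category.assoc]; rw [hw₁, comp_zero]) with hψh
  have hpψ : p' ≫ ψh = p := hS1'.exact.g_desc _ _
  set ψh' : N ⟶ N' := hS1.exact.desc p'
    (by show (ιL ≫ α) ≫ p' = 0; rw [hfBβ']; simp only [Category.assoc]; rw [hw₁', comp_zero]) with hψh'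
  have hpψ' : p ≫ ψh' = p' := hS1.exact.g_desc _ _
  have hψ1 : ψh ≫ ψh' = 𝟙 N' := by
    rw [← cancel_epi p', reassoc_of% hpψ, hpψ', Category.comp_id]
  have hψ2 : ψh' ≫ ψh = 𝟙 N := by
    rw [← cancel_epi p, reassoc_of% hpψ', hpψ, Category.comp_id]
  set ψ : N' ≅ N := ⟨ψh, ψh', hψ1, hψ2⟩ with hψ
  -- compatibility of `ψ` with `fA`
  have hψιN : ιN' ≫ ψh = fAh ≫ ιN := by
    rw [← cancel_epi πL']
    calc πL' ≫ ιN' ≫ ψh = α' ≫ p' ≫ ψh := by rw [← reassoc_of% hcomp']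
    _ = α' ≫ p := by rw [hpψ]
    _ = φ.hom ≫ α ≫ p := by rw [← hφα, Category.assoc]
    _ = φ.hom ≫ πL ≫ ιN := by rw [hcomp]
    _ = πL' ≫ fAh ≫ ιN := by rw [← reassoc_of% hπfA]
  have hψιN' : ιN ≫ ψh' = fAh' ≫ ιN' := by
    have h1 : ιN ≫ ψh' = (fAh' ≫ fAh) ≫ ιN ≫ ψh' := by rw [hfA2, Category.id_comp]
    rw [h1, Category.assoc, ← reassoc_of% hψιN, hψ1, Category.comp_id]
  -- construction of `fC`
  set fCh : C ⟶ C := hN'.exact.desc (ψh ≫ πN)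
    (by rw [reassoc_of% hψιN]; simp [wN]) with hfCh
  have hπfC : πN' ≫ fCh = ψh ≫ πN := hN'.exact.g_desc _ _
  set fCh' : C ⟶ C := hN.exact.desc (ψh' ≫ πN')
    (by rw [reassoc_of% hψιN']; simp [wN']) with hfCh'
  have hπfC' : πN ≫ fCh' = ψh' ≫ πN' := hN.exact.g_desc _ _
  have hfC1 : fCh ≫ fCh' = 𝟙 C := by
    rw [← cancel_epi πN', reassoc_of% hπfC, hπfC', reassoc_of% hψ1, Category.comp_id]
  have hfC2 : fCh' ≫ fCh = 𝟙 C := by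
    rw [← cancel_epi πN, reassoc_of% hπfC', hπfC, reassoc_of% hψ2, Category.comp_id]
  exact ⟨fB, fA, ⟨fCh, fCh', hfC1, hfC2⟩, φ, ψ, hφιL, hπfA.symm, hψιN, hπfC.symm⟩
end

section
/- Let T be an abelian category with objects B, A, C, and suppose given exact functors Wb, Wa : T → T (each preserving short exact sequences), natural transformations εb : Wb ⟹ Id_T and εa : Wa ⟹ Id_T all of whose components are monomorphisms, and a natural transformation η : Wb ⟹ Wa with εa ∘ η = εb, such that: the components of εb and εa at B are isomorphisms, the component of εa at A is an isomorphism, Wb(A) ≅ 0, Wb(C) ≅ 0, and Wa(C) ≅ 0. Let ℒ : 0 → B →ι_L→ L →π_L→ A → 0 and 𝒩 : 0 → A →ι_N→ N →π_N→ C → 0 be short exact sequences, and suppose M is an object attached to the pair (ℒ, 𝒩). Then there are isomorphisms B ≅ Wb(M), A ≅ coker(η_M : Wb(M) → Wa(M)), and C ≅ coker(εa at M : Wa(M) → M). -/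
/-!
Exactness of `Wb` and the vanishing of `Wb` on `A` and `C` kill `Wb N`, so applying `Wb` to
`0 → B → M → N → 0` gives `Wb B ≅ Wb M`, while `Wb B ≅ B`. Likewise `Wa C = 0` and
`0 → L → M → C → 0` give `Wa L ≅ Wa M`, and the five lemma applied to `εa` on `ℒ` gives
`Wa L ≅ L`. Under these identifications `η_M` becomes `ιL` and `(εa)_M` becomes `α`, whose
cokernels are `A` and `C`.
-/

open CategoryTheory CategoryTheory.Limits

universe v u

variable {T : Type u} [Category.{v} T] [Abelian T]

namespace CategoryTheory

lemma ShortComplex.ShortExact.isZero_X₂ {C : Type*} [Category C] [Preadditive C]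
    {S : ShortComplex C} (hS : S.ShortExact) (h₁ : IsZero S.X₁) (h₃ : IsZero S.X₃) :
    IsZero S.X₂ :=
  hS.exact.isZero_X₂ (h₁.eq_of_src _ _) (h₃.eq_of_tgt _ _)

lemma NatTrans.isIso_app_X₂_of_shortExact {C D : Type*} [Category C] [Category D]
    [Preadditive C] [Preadditive D] [Balanced D] {F G : C ⥤ D}
    [F.PreservesZeroMorphisms] [G.PreservesZeroMorphisms] (ε : F ⟶ G) {S : ShortComplex C}
    (hF : (S.map F).ShortExact) (hG : (S.map G).ShortExact)
    (h₁ : IsIso (ε.app S.X₁)) (h₃ : IsIso (ε.app S.X₃)) : IsIso (ε.app S.X₂) :=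
  ShortComplex.isIso₂_of_shortExact_of_isIso₁₃' (S.mapNatTrans ε) hF hG h₁ h₃

noncomputable def ShortComplex.ShortExact.isoCokernelOfIsos {C : Type*} [Category C]
    [Preadditive C] [Balanced C] [HasCokernels C] {S : ShortComplex C} (hS : S.ShortExact)
    {Y₁ Y₂ : C} {g : Y₁ ⟶ Y₂} (e₁ : S.X₁ ≅ Y₁) (e₂ : S.X₂ ≅ Y₂)
    (w : S.f ≫ e₂.hom = e₁.hom ≫ g) : S.X₃ ≅ cokernel g :=
  hS.gIsCokernel.coconePointUniqueUpToIso (colimit.isColimit _) ≪≫ cokernel.mapIso S.f g e₁ e₂ w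

lemma NatTrans.comp_inv_app_comp_map {C : Type*} [Category C] {F G : C ⥤ C}
    {εF : F ⟶ 𝟭 C} {εG : G ⟶ 𝟭 C} (η : F ⟶ G) (hη : η ≫ εG = εF) {X Y Z : C} (f : X ⟶ Y)
    (g : Y ⟶ Z) [IsIso (εF.app X)] [IsIso (εG.app Y)] :
    f ≫ inv (εG.app Y) ≫ G.map g = inv (εF.app X) ≫ F.map (f ≫ g) ≫ η.app Z := by
  have hf : f ≫ inv (εG.app Y) = inv (εF.app X) ≫ η.app X ≫ G.map f := by
    rw [IsIso.comp_inv_eq, Category.assoc, Category.assoc, IsIso.eq_inv_comp, ← hη,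
      NatTrans.comp_app, Category.assoc, εG.naturality f, Functor.id_map]
  simp [reassoc_of% hf]

end CategoryTheory

theorem weight_pieces_of_attached_general
    (Wb Wa : T ⥤ T)
    [PreservesFiniteLimits Wb] [PreservesFiniteColimits Wb]
    [PreservesFiniteLimits Wa] [PreservesFiniteColimits Wa]
    (εb : Wb ⟶ 𝟭 T) (εa : Wa ⟶ 𝟭 T) (η : Wb ⟶ Wa)
    (hη : η ≫ εa = εb)
    {B A C : T}
    (hBb : IsIso (εb.app B)) (hBa : IsIso (εa.app B)) (hAa : IsIso (εa.app A))
    (hAb : IsZero (Wb.obj A)) (hCb : IsZero (Wb.obj C)) (hCa : IsZero (Wa.obj C))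
    {L N : T}
    (ιL : B ⟶ L) (πL : L ⟶ A) (wL : ιL ≫ πL = 0)
    (hL : (ShortComplex.mk ιL πL wL).ShortExact)
    (ιN : A ⟶ N) (πN : N ⟶ C) (wN : ιN ≫ πN = 0)
    (hN : (ShortComplex.mk ιN πN wN).ShortExact)
    {M : T} (hM : IsAttached ιL πL ιN πN M) :
    Nonempty (B ≅ Wb.obj M) ∧
    Nonempty (A ≅ cokernel (η.app M)) ∧
    Nonempty (C ≅ cokernel (εa.app M)) := by
  obtain ⟨α, p, _, _, hS₁, hS₂, -⟩ := hM
  have hWbN : IsZero (Wb.obj N) := (hN.map_of_exact Wb).isZero_X₂ hAb hCb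
  have : IsIso (Wb.map (ιL ≫ α)) := (hS₁.map_of_exact Wb).isIso_f_iff.2 hWbN
  have : IsIso (Wa.map α) := (hS₂.map_of_exact Wa).isIso_f_iff.2 hCa
  have : IsIso (εa.app L) := εa.isIso_app_X₂_of_shortExact (hL.map_of_exact Wa) hL hBa hAa
  let eB : B ≅ Wb.obj M := (asIso (εb.app B)).symm ≪≫ asIso (Wb.map (ιL ≫ α))
  let eL : L ≅ Wa.obj M := (asIso (εa.app L)).symm ≪≫ asIso (Wa.map α)
  refine ⟨⟨eB⟩, ⟨hL.isoCokernelOfIsos eB eL ?_⟩, ⟨hS₂.isoCokernelOfIsos eL (Iso.refl M) ?_⟩⟩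
  · simpa [eB, eL] using NatTrans.comp_inv_app_comp_map η hη ιL α
  · simp [eL]

theorem weight_pieces_of_attached
    (Wb Wa : T ⥤ T)
    [PreservesFiniteLimits Wb] [PreservesFiniteColimits Wb]
    [PreservesFiniteLimits Wa] [PreservesFiniteColimits Wa]
    (εb : Wb ⟶ 𝟭 T) (εa : Wa ⟶ 𝟭 T) (η : Wb ⟶ Wa)
    (hεb : ∀ X : T, Mono (εb.app X)) (hεa : ∀ X : T, Mono (εa.app X))
    (hη : η ≫ εa = εb)
    {B A C : T}
    (hBb : IsIso (εb.app B)) (hBa : IsIso (εa.app B)) (hAa : IsIso (εa.app A))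
    (hAb : IsZero (Wb.obj A)) (hCb : IsZero (Wb.obj C)) (hCa : IsZero (Wa.obj C))
    {L N : T}
    (ιL : B ⟶ L) (πL : L ⟶ A) (wL : ιL ≫ πL = 0)
    (hL : (ShortComplex.mk ιL πL wL).ShortExact)
    (ιN : A ⟶ N) (πN : N ⟶ C) (wN : ιN ≫ πN = 0)
    (hN : (ShortComplex.mk ιN πN wN).ShortExact)
    {M : T} (hM : IsAttached ιL πL ιN πN M) :
    Nonempty (B ≅ Wb.obj M) ∧
    Nonempty (A ≅ cokernel (η.app M)) ∧
    Nonempty (C ≅ cokernel (εa.app M)) :=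
  weight_pieces_of_attached_general Wb Wa εb εa η hη hBb hBa hAa hAb hCb hCa ιL πL wL hL ιN πN wN hN
    hM
end

section
/- Let T be an abelian category with objects B, A, C, and suppose given exact functors Wb, Wa : T → T (each preserving short exact sequences), natural transformations εb : Wb ⟹ Id_T and εa : Wa ⟹ Id_T all of whose components are monomorphisms, and a natural transformation η : Wb ⟹ Wa with εa ∘ η = εb, such that: the components of εb and εa at B are isomorphisms, the component of εa at A is an isomorphism, Wb(A) ≅ 0, Wb(C) ≅ 0, and Wa(C) ≅ 0. Let M be an object of T admitting isomorphisms B ≅ Wb(M), A ≅ coker(η_M : Wb(M) → Wa(M)), and C ≅ coker(εa at M : Wa(M) → M). Then there exist short exact sequences ℒ : 0 → B → L → A → 0 and 𝒩 : 0 → A → N → C → 0 in T such that M is attached to the pair (ℒ, 𝒩). -/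
/-!
STATEMENT 11: (Existence part of Proposition 6.6(c) of the paper.)
With the same weight-filtration data `Wb`, `Wa`, `εb`, `εa`, `η` as in
Statement 10, any object `M` admitting isomorphisms `B ≅ Wb(M)`,
`A ≅ coker(η_M)` and `C ≅ coker((εa)_M)` is attached to some pair
`(ℒ, 𝒩)` of short exact sequences `0 → B → L → A → 0` and
`0 → A → N → C → 0`.
-/

open CategoryTheory CategoryTheory.Limits

universe v u

variable {T : Type u} [Category.{v} T] [Abelian T]

/-- The canonical cokernel short exact sequence `0 → X → Y → coker f → 0`
for a mono `f : X ⟶ Y`, twisted by isomorphisms at both ends. -/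
lemma shortExact_of_mono_cokernel {X Y B' A' : T} (f : X ⟶ Y) [Mono f]
    (i : B' ≅ X) (j : cokernel f ≅ A') {u : B' ⟶ Y} {v : Y ⟶ A'}
    (hu : u = i.hom ≫ f) (hv : v = cokernel.π f ≫ j.hom) (w : u ≫ v = 0) :
    (ShortComplex.mk u v w).ShortExact := by
  subst hu hv
  have base : (ShortComplex.mk f (cokernel.π f) (cokernel.condition f)).ShortExact :=
    { exact := ShortComplex.exact_of_g_is_cokernel _ (cokernelIsCokernel f)
      mono_f := inferInstance
      epi_g := inferInstance }
  exact ShortComplex.shortExact_of_iso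
    (ShortComplex.isoMk i.symm (Iso.refl Y) j (by simp) (by simp)) base

theorem exists_attached_pair_of_weight_pieces
    (Wb Wa : T ⥤ T)
    [PreservesFiniteLimits Wb] [PreservesFiniteColimits Wb]
    [PreservesFiniteLimits Wa] [PreservesFiniteColimits Wa]
    (εb : Wb ⟶ 𝟭 T) (εa : Wa ⟶ 𝟭 T) (η : Wb ⟶ Wa)
    (hεb : ∀ X : T, Mono (εb.app X)) (hεa : ∀ X : T, Mono (εa.app X))
    (hη : η ≫ εa = εb)
    {B A C : T}
    (hBb : IsIso (εb.app B)) (hBa : IsIso (εa.app B)) (hAa : IsIso (εa.app A))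
    (hAb : IsZero (Wb.obj A)) (hCb : IsZero (Wb.obj C)) (hCa : IsZero (Wa.obj C))
    (M : T)
    (iB : B ≅ Wb.obj M) (iA : A ≅ cokernel (η.app M))
    (iC : C ≅ cokernel (εa.app M)) :
    ∃ (L N : T) (ιL : B ⟶ L) (πL : L ⟶ A) (ιN : A ⟶ N) (πN : N ⟶ C)
      (wL : ιL ≫ πL = 0) (wN : ιN ≫ πN = 0),
      (ShortComplex.mk ιL πL wL).ShortExact ∧
      (ShortComplex.mk ιN πN wN).ShortExact ∧
      IsAttached ιL πL ιN πN M := by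
  have hεaM : Mono (εa.app M) := hεa M
  have hεbM : Mono (εb.app M) := hεb M
  have hcomp : η.app M ≫ εa.app M = εb.app M := by
    rw [← NatTrans.comp_app, hη]
  have hηM : Mono (η.app M) := by
    have : Mono (η.app M ≫ εa.app M) := hcomp ▸ hεbM
    exact mono_of_mono (η.app M) (εa.app M)
  -- the two induced maps between cokernels
  have sq1 : η.app M ≫ εa.app M = 𝟙 _ ≫ εb.app M := by
    rw [hcomp]; exact (Category.id_comp _).symm
  have sq2 : εb.app M ≫ 𝟙 M = η.app M ≫ εa.app M := by
    rw [hcomp]; exact Category.comp_id _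
  set φ : cokernel (η.app M) ⟶ cokernel (εb.app M) :=
    cokernel.map (η.app M) (εb.app M) (𝟙 _) (εa.app M) sq1 with hφ
  set ψ : cokernel (εb.app M) ⟶ cokernel (εa.app M) :=
    cokernel.map (εb.app M) (εa.app M) (η.app M) (𝟙 M) sq2 with hψ
  have hπφ : cokernel.π (η.app M) ≫ φ = εa.app M ≫ cokernel.π (εb.app M) := by
    simp [hφ]
  have hπψ : cokernel.π (εb.app M) ≫ ψ = cokernel.π (εa.app M) := by
    simp [hψ]
  -- exactness of the cokernel sequences we will use for chasing
  have SEb : (ShortComplex.mk (εb.app M) (cokernel.π (εb.app M))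
      (cokernel.condition _)).ShortExact :=
    shortExact_of_mono_cokernel (εb.app M) (Iso.refl _) (Iso.refl _)
      (by simp) (by simp) _
  have SEa : (ShortComplex.mk (εa.app M) (cokernel.π (εa.app M))
      (cokernel.condition _)).ShortExact :=
    shortExact_of_mono_cokernel (εa.app M) (Iso.refl _) (Iso.refl _)
      (by simp) (by simp) _
  -- φ is a monomorphism
  have hφmono : Mono φ := by
    rw [Preadditive.mono_iff_cancel_zero]
    intro X x hx
    obtain ⟨X', e, he, y, hy⟩ :=
      surjective_up_to_refinements_of_epi (cokernel.π (η.app M)) x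
    have hy2 : (y ≫ εa.app M) ≫ cokernel.π (εb.app M) = 0 := by
      rw [Category.assoc, ← hπφ, ← Category.assoc, ← hy, Category.assoc, hx, comp_zero]
    obtain ⟨X'', e', he', z, hz⟩ := SEb.exact.exact_up_to_refinements (y ≫ εa.app M) hy2
    have hz' : e' ≫ y = z ≫ η.app M := by
      have : (e' ≫ y) ≫ εa.app M = (z ≫ η.app M) ≫ εa.app M := by
        simpa only [Category.assoc, hcomp] using hz
      exact (cancel_mono (εa.app M)).1 this
    have hzero : (e' ≫ e) ≫ x = 0 := by
      rw [Category.assoc, hy, ← Category.assoc, hz', Category.assoc,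
        cokernel.condition, comp_zero]
    haveI : Epi (e' ≫ e) := epi_comp _ _
    exact (cancel_epi (e' ≫ e)).1 (by rw [hzero, comp_zero])
  -- ψ is an epimorphism
  have hψepi : Epi ψ := by
    have : Epi (cokernel.π (εb.app M) ≫ ψ) := by
      rw [hπψ]; infer_instance
    exact epi_of_epi (cokernel.π (εb.app M)) ψ
  -- exactness of 0 → coker η → coker εb → coker εa → 0 in the middle
  have wφψ : φ ≫ ψ = 0 := by
    rw [← cancel_epi (cokernel.π (η.app M)), ← Category.assoc, hπφ,
      Category.assoc, hπψ, cokernel.condition, comp_zero]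
  have hmidexact : (ShortComplex.mk φ ψ wφψ).Exact := by
    rw [ShortComplex.exact_iff_exact_up_to_refinements]
    intro X x hx
    have hx' : x ≫ ψ = 0 := hx
    obtain ⟨X', e, he, y, hy⟩ :=
      surjective_up_to_refinements_of_epi (cokernel.π (εb.app M)) x
    have hy2 : y ≫ cokernel.π (εa.app M) = 0 := by
      rw [← hπψ, ← Category.assoc, ← hy, Category.assoc, hx', comp_zero]
    obtain ⟨X'', e', he', z, hz⟩ := SEa.exact.exact_up_to_refinements y hy2
    refine ⟨X'', e' ≫ e, epi_comp _ _, z ≫ cokernel.π (η.app M), ?_⟩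
    show (e' ≫ e) ≫ x = (z ≫ cokernel.π (η.app M)) ≫ φ
    rw [Category.assoc, hy, ← Category.assoc, hz, Category.assoc, Category.assoc, hπφ,
      ← Category.assoc]
  have SEN : (ShortComplex.mk φ ψ wφψ).ShortExact :=
    { exact := hmidexact, mono_f := hφmono, epi_g := hψepi }
  -- now assemble everything
  refine ⟨Wa.obj M, cokernel (εb.app M),
    iB.hom ≫ η.app M, cokernel.π (η.app M) ≫ iA.inv,
    iA.hom ≫ φ, ψ ≫ iC.inv, ?_, ?_, ?_, ?_, ?_⟩
  · simp
  · rw [Category.assoc,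
      show φ ≫ ψ ≫ iC.inv = 0 from by rw [← Category.assoc, wφψ, zero_comp], comp_zero]
  · exact shortExact_of_mono_cokernel (η.app M) iB iA.symm rfl rfl _
  · refine ShortComplex.shortExact_of_iso (S₁ := ShortComplex.mk φ ψ wφψ)
      (ShortComplex.isoMk iA.symm (Iso.refl (cokernel (εb.app M))) iC.symm ?_ ?_) SEN
    · simp
    · simp
  · refine ⟨εa.app M, cokernel.π (εb.app M), ?_, ?_, ?_, ?_, ?_⟩
    · have h0 : η.app M ≫ εa.app M ≫ cokernel.π (εb.app M) = 0 := by
        rw [← Category.assoc, hcomp, cokernel.condition]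
      simp only [Category.assoc]
      rw [h0, comp_zero]
    · rw [show cokernel.π (εb.app M) ≫ ψ ≫ iC.inv = cokernel.π (εa.app M) ≫ iC.inv from
        by rw [← Category.assoc, hπψ], ← Category.assoc, cokernel.condition, zero_comp]
    · exact shortExact_of_mono_cokernel (εb.app M) iB (Iso.refl _)
        (by rw [Category.assoc, hcomp]) (by simp) _
    · exact shortExact_of_mono_cokernel (εa.app M) (Iso.refl _) iC.symm
        (by simp) (by rw [← Category.assoc, hπψ]; rfl) _
    · rw [Category.assoc, Iso.inv_hom_id_assoc]
      exact hπφ.symm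
end

section
/- Let T be an abelian category, and let ℒ : 0 → B →ι_L→ L →π_L→ A → 0 and 𝒩 : 0 → A →ι_N→ N →π_N→ C → 0 be short exact sequences. Suppose Ext¹(C, B) = 0 (the group Ext¹(C, B) is trivial). Let f_B, f_A, f_C be automorphisms of B, A, C, and let ℒ′ : 0 → B →(ι_L∘f_B)→ L →(f_A⁻¹∘π_L)→ A → 0 and 𝒩′ : 0 → A →(ι_N∘f_A)→ N →(f_C∘π_N)→ C → 0 be the twisted sequences. If M is attached to (ℒ, 𝒩) and M′ is attached to (ℒ′, 𝒩′), then M and M′ are isomorphic. -/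
/-!
STATEMENT 12: (Injectivity part of Proposition 6.6(d) of the paper.)
Let `ℒ : 0 → B → L → A → 0` and `𝒩 : 0 → A → N → C → 0` be short exact
sequences in an abelian category `T` with `Ext¹(C, B) = 0`. Let
`f_B, f_A, f_C` be automorphisms of `B, A, C` and let `(ℒ′, 𝒩′)` be
the twist of `(ℒ, 𝒩)` by them. If `M` is attached to `(ℒ, 𝒩)` and `M′`
is attached to `(ℒ′, 𝒩′)`, then `M` and `M′` are isomorphic.
-/

open CategoryTheory CategoryTheory.Abelian

universe w v u

variable {T : Type u} [Category.{v} T] [Abelian T]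

/-!
If `α, p` and `α', p'` witness that `M` and `M'` are attached to the same pair, then `M'` is an
extension of `N` by `B` and `M` one of `C` by `L`, and `Ext¹(C, B) = 0` yields `ψ : M ⟶ M'` with
`α ≫ ψ = α'` and `ψ ≫ p' = p`: the obstruction to lifting `p` through `p'` vanishes on `L`, hence
comes from `Ext¹(C, B)`; the defect of a lift on `L` factors through `B` and extends to `M` for the
same reason. By the five lemma `ψ` is an isomorphism. Twisting by automorphisms does not change
which objects are attached: the same `α` and `p` still work.
-/

namespace CategoryTheory.ShortComplex.ShortExact

variable [HasExt.{w} T] {S : ShortComplex T} (hS : S.ShortExact)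

include hS

lemma exists_lift_of_mk₀_comp_extClass_eq_zero {X : T} (f : X ⟶ S.X₃)
    (hf : (Ext.mk₀ f).comp hS.extClass (zero_add 1) = 0) :
    ∃ g : X ⟶ S.X₂, g ≫ S.g = f := by
  obtain ⟨x, hx⟩ := Ext.covariant_sequence_exact₃ X hS (Ext.mk₀ f) rfl hf
  obtain ⟨g, rfl⟩ := (Ext.mk₀_bijective X S.X₂).2 x
  exact ⟨g, (Ext.mk₀_bijective X S.X₃).1 (by rwa [Ext.mk₀_comp_mk₀] at hx)⟩

lemma exists_f_comp_eq_of_ext_one_eq_zero {Y : T} (hext : ∀ e : Ext S.X₃ Y 1, e = 0)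
    (u : S.X₁ ⟶ Y) : ∃ v : S.X₂ ⟶ Y, S.f ≫ v = u := by
  obtain ⟨x, hx⟩ := Ext.contravariant_sequence_exact₁ hS Y (Ext.mk₀ u) rfl (hext _)
  obtain ⟨v, rfl⟩ := (Ext.mk₀_bijective S.X₂ Y).2 x
  exact ⟨v, (Ext.mk₀_bijective S.X₁ Y).1 (by rwa [Ext.mk₀_comp_mk₀] at hx)⟩

lemma ext_eq_zero_of_mk₀_f_comp_eq_zero {Y : T} {n : ℕ} (hext : ∀ e : Ext S.X₃ Y n, e = 0)
    (e : Ext S.X₂ Y n) (he : (Ext.mk₀ S.f).comp e (zero_add n) = 0) : e = 0 := by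
  obtain ⟨x, rfl⟩ := Ext.contravariant_sequence_exact₂ hS Y e he
  rw [hext x, Ext.comp_zero]

lemma exists_hom_comp_eq_of_ext_one_eq_zero {F : ShortComplex T} (hF : F.ShortExact)
    (hext : ∀ e : Ext F.X₃ S.X₁ 1, e = 0) (p : F.X₂ ⟶ S.X₃) (α : F.X₁ ⟶ S.X₂)
    (h : F.f ≫ p = α ≫ S.g) : ∃ ψ : F.X₂ ⟶ S.X₂, F.f ≫ ψ = α ∧ ψ ≫ S.g = p := by
  have hobstruction : (Ext.mk₀ p).comp hS.extClass (zero_add 1) = 0 := by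
    refine hF.ext_eq_zero_of_mk₀_f_comp_eq_zero hext _ ?_
    rw [Ext.mk₀_comp_mk₀_assoc, h, ← Ext.mk₀_comp_mk₀_assoc, hS.comp_extClass, Ext.comp_zero]
  obtain ⟨φ, hφ⟩ := hS.exists_lift_of_mk₀_comp_extClass_eq_zero p hobstruction
  have hdefect : (F.f ≫ φ - α) ≫ S.g = 0 := by simp [hφ, h]
  have := hS.mono_f
  obtain ⟨v, hv⟩ := hF.exists_f_comp_eq_of_ext_one_eq_zero hext (hS.exact.lift _ hdefect)
  refine ⟨φ - v ≫ S.f, ?_, by simp [hφ]⟩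
  rw [Preadditive.comp_sub, reassoc_of% hv, hS.exact.lift_f, sub_sub_cancel]

end CategoryTheory.ShortComplex.ShortExact

namespace IsAttached

lemma twist {B L A N C M : T} {ιL : B ⟶ L} {πL : L ⟶ A} {ιN : A ⟶ N} {πN : N ⟶ C}
    (fB : B ≅ B) (fA : A ≅ A) (fC : C ≅ C) (h : IsAttached ιL πL ιN πN M) :
    IsAttached (fB.hom ≫ ιL) (πL ≫ fA.inv) (fA.hom ≫ ιN) (πN ≫ fC.hom) M := by
  obtain ⟨α, p, w₁, w₂, h₁, h₂, h₃⟩ := h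
  refine ⟨α, p, by simpa using w₁, by simp [reassoc_of% w₂], ?_, ?_, by simp [h₃]⟩
  · exact ShortComplex.shortExact_of_iso
      (ShortComplex.isoMk fB.symm (Iso.refl M) (Iso.refl N) (by simp) (by simp)) h₁
  · exact ShortComplex.shortExact_of_iso
      (ShortComplex.isoMk (Iso.refl L) (Iso.refl M) fC (by simp) (by simp)) h₂

lemma nonempty_iso [HasExt.{w} T] {B L A N C M M' : T} {ιL : B ⟶ L} {πL : L ⟶ A} {ιN : A ⟶ N}
    {πN : N ⟶ C} (hext : ∀ e : Ext C B 1, e = 0)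
    (hM : IsAttached ιL πL ιN πN M) (hM' : IsAttached ιL πL ιN πN M') : Nonempty (M ≅ M') := by
  obtain ⟨α, p, -, w₂, -, h₂, h₃⟩ := hM
  obtain ⟨α', p', w₁', w₂', h₁', h₂', h₃'⟩ := hM'
  obtain ⟨ψ, hψα, hψp⟩ := h₁'.exists_hom_comp_eq_of_ext_one_eq_zero (F := .mk α (p ≫ πN) w₂)
    h₂ hext p α' (h₃.trans h₃'.symm)
  let Ψ : ShortComplex.mk α (p ≫ πN) w₂ ⟶ ShortComplex.mk α' (p' ≫ πN) w₂' :=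
    { τ₁ := 𝟙 L, τ₂ := ψ, τ₃ := 𝟙 C
      comm₁₂ := by simpa using hψα.symm
      comm₂₃ := by simp [reassoc_of% hψp] }
  have := ShortComplex.isIso₂_of_shortExact_of_isIso₁₃ Ψ h₂ h₂'
  exact ⟨asIso Ψ.τ₂⟩

end IsAttached

theorem attached_iso_of_twisted_pair_general
    [HasExt.{w} T] {B L A N C : T}
    (ιL : B ⟶ L) (πL : L ⟶ A)
    (ιN : A ⟶ N) (πN : N ⟶ C)
    (hext : ∀ e : Ext C B 1, e = 0)
    (fB : B ≅ B) (fA : A ≅ A) (fC : C ≅ C)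
    {M M' : T}
    (hM : IsAttached ιL πL ιN πN M)
    (hM' : IsAttached (fB.hom ≫ ιL) (πL ≫ fA.inv) (fA.hom ≫ ιN) (πN ≫ fC.hom) M') :
    Nonempty (M ≅ M') :=
  (hM.twist fB fA fC).nonempty_iso hext hM'

theorem attached_iso_of_twisted_pair
    [HasExt.{w} T] {B L A N C : T}
    (ιL : B ⟶ L) (πL : L ⟶ A) (wL : ιL ≫ πL = 0)
    (hL : (ShortComplex.mk ιL πL wL).ShortExact)
    (ιN : A ⟶ N) (πN : N ⟶ C) (wN : ιN ≫ πN = 0)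
    (hN : (ShortComplex.mk ιN πN wN).ShortExact)
    (hext : ∀ e : Ext C B 1, e = 0)
    (fB : B ≅ B) (fA : A ≅ A) (fC : C ≅ C)
    {M M' : T}
    (hM : IsAttached ιL πL ιN πN M)
    (hM' : IsAttached (fB.hom ≫ ιL) (πL ≫ fA.inv) (fA.hom ≫ ιN) (πN ≫ fC.hom) M') :
    Nonempty (M ≅ M') :=
  attached_iso_of_twisted_pair_general ιL πL ιN πN hext fB fA fC hM hM'
end
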